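/- arXiv:math/0206101 — 2 statements merged into one kernel-verified Lean document; each statement's English description precedes it below -/
import Mathlib

section
/- Let K be a field and let σ be a K-algebra automorphism of the formal power series ring K⟦X⟧. Suppose σ^m is the identity for some integer m ≥ 1 with (m : K) ≠ 0 (i.e. the characteristic of K does not divide m), and suppose the coefficient of X in σ(X) equals 1. Then σ is the identity automorphism. -/
/-! An endomorphism of `K⟦X⟧` maps `X` into `(X)`, hence preserves the `X`-adic filtration and is
determined by the image of `X`; so it suffices to show `σ X = X`. Otherwise write
`σ X = X + c X^k + O(X^(k+1))` with `c ≠ 0`, where `k ≥ 2` because `σ X ≡ X` modulo `X²`.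
Since `σ` fixes `X^k u` modulo `X^(k+1)`, induction gives `σ^j X = X + j c X^k + O(X^(k+1))`,
and `j = m` forces `m c = 0`. -/

open PowerSeries

namespace PowerSeries

variable {K : Type*} [Field K]

@[simp]
theorem algHom_C (φ : K⟦X⟧ →ₐ[K] K⟦X⟧) (a : K) : φ (C a) = C a := by
  simpa [algebraMap_apply'] using φ.commutes a

theorem constantCoeff_algHom_X (φ : K⟦X⟧ →ₐ[K] K⟦X⟧) : constantCoeff (φ X) = 0 := by
  by_contra h
  -- `X - a` is a unit for `a ≠ 0`, but its image `φ X - a` is not when `a` is the constant term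
  have hunit : IsUnit (X - C (constantCoeff (φ X)) : K⟦X⟧) := by
    simpa [isUnit_iff_constantCoeff] using h
  simpa [isUnit_iff_constantCoeff] using hunit.map φ

theorem X_dvd_algHom_X (φ : K⟦X⟧ →ₐ[K] K⟦X⟧) : X ∣ φ X :=
  X_dvd_iff.mpr (constantCoeff_algHom_X φ)

@[simp]
theorem constantCoeff_algHom_apply (φ : K⟦X⟧ →ₐ[K] K⟦X⟧) (f : K⟦X⟧) :
    constantCoeff (φ f) = constantCoeff f := by
  conv_lhs => rw [eq_X_mul_shift_add_const f]
  simp [constantCoeff_algHom_X]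

theorem algHom_ext_of_X {φ ψ : K⟦X⟧ →ₐ[K] K⟦X⟧} (h : φ X = ψ X) : φ = ψ := by
  suffices hdvd : ∀ n f, X ^ n ∣ φ f - ψ f by
    ext f n
    simpa [sub_eq_zero] using X_pow_dvd_iff.mp (hdvd (n + 1) f) n n.lt_succ_self
  intro n
  induction n with
  | zero => simp
  | succ n ih =>
    intro f
    obtain ⟨w, hw⟩ := X_dvd_algHom_X φ
    obtain ⟨g, hg⟩ : ∃ g, f = X * g + C (constantCoeff f) := ⟨_, eq_X_mul_shift_add_const f⟩
    have hsplit : φ f - ψ f = X * (w * (φ g - ψ g)) := by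
      rw [hg]
      simp only [map_add, map_mul, algHom_C, ← h, hw]
      ring
    rw [hsplit, pow_succ']
    exact mul_dvd_mul_left X (Dvd.dvd.mul_left (ih _) w)

theorem X_pow_succ_dvd_algHom_X_pow_mul_sub {φ : K⟦X⟧ →ₐ[K] K⟦X⟧} (h1 : coeff 1 (φ X) = 1)
    (n : ℕ) (u : K⟦X⟧) : X ^ (n + 1) ∣ φ (X ^ n * u) - X ^ n * u := by
  obtain ⟨w, hw⟩ := X_dvd_algHom_X φ
  have hw1 : constantCoeff w = 1 := by simpa [hw, coeff_succ_X_mul] using h1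
  have hsplit : φ (X ^ n * u) - X ^ n * u = X ^ n * (w ^ n * φ u - u) := by
    rw [map_mul, map_pow, hw]
    ring
  rw [hsplit, pow_succ]
  exact mul_dvd_mul_left _ (X_dvd_iff.mpr (by simp [hw1]))

theorem X_pow_order_succ_dvd_sub_monomial {R : Type*} [Ring R] (f : R⟦X⟧) :
    X ^ (f.order.toNat + 1) ∣ f - monomial f.order.toNat (coeff f.order.toNat f) := by
  refine X_pow_dvd_iff.mpr fun i hi ↦ ?_
  rcases (Nat.lt_succ_iff.mp hi).lt_or_eq with hlt | rfl
  · simp [coeff_monomial, hlt.ne, coeff_of_lt_order_toNat _ hlt]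
  · simp

theorem X_pow_succ_dvd_pow_apply_X_sub {φ : K⟦X⟧ →ₐ[K] K⟦X⟧} {k : ℕ} {c : K} (hk : 2 ≤ k)
    (hφ : X ^ (k + 1) ∣ φ X - X - monomial k c) (j : ℕ) :
    X ^ (k + 1) ∣ (φ ^ j) X - X - monomial k (j * c) := by
  have h1 : coeff 1 (φ X) = 1 := by
    have := X_pow_dvd_iff.mp hφ 1 (by omega)
    simp_all [coeff_monomial, show 1 ≠ k by omega, sub_eq_zero]
  induction j with
  | zero => simp
  | succ j ih =>
    obtain ⟨v, hv⟩ : X ^ k ∣ (φ ^ j) X - X := by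
      have : X ^ k ∣ monomial k (j * c) := ⟨C (j * c), by rw [monomial_eq_C_mul_X_pow]; ring⟩
      simpa using dvd_add ((pow_dvd_pow X k.le_succ).trans ih) this
    have hsplit : (φ ^ (j + 1)) X - X - monomial k ((j + 1 : ℕ) * c) =
        (φ X - X - monomial k c) + (φ (X ^ k * v) - X ^ k * v) +
          ((φ ^ j) X - X - monomial k (j * c)) := by
      have hf : (φ ^ j) X = X + X ^ k * v := by rw [← hv]; ring
      rw [pow_succ', AlgHom.mul_apply, hf]
      simp only [map_add, Nat.cast_succ, add_mul, one_mul]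
      ring
    rw [hsplit]
    exact dvd_add (dvd_add hφ (X_pow_succ_dvd_algHom_X_pow_mul_sub h1 k v)) ih

theorem algHom_X_eq_X_of_pow_apply_X_eq {φ : K⟦X⟧ →ₐ[K] K⟦X⟧} (h1 : coeff 1 (φ X) = 1)
    {m : ℕ} (hmK : (m : K) ≠ 0) (hφm : (φ ^ m) X = X) : φ X = X := by
  by_contra hne
  set d := φ X - X
  have hd : d ≠ 0 := sub_ne_zero.mpr hne
  have hk : 2 ≤ d.order.toNat := by
    have h2 : ((2 : ℕ) : ℕ∞) ≤ d.order := nat_le_order d 2 fun i hi ↦ by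
      interval_cases i <;> simp [d, h1]
    rw [← coe_toNat_order hd] at h2
    exact_mod_cast h2
  have hdvd := X_pow_succ_dvd_pow_apply_X_sub hk (X_pow_order_succ_dvd_sub_monomial d) m
  rw [hφm] at hdvd
  simpa [hmK, coeff_order hd] using X_pow_dvd_iff.mp hdvd _ d.order.toNat.lt_succ_self

end PowerSeries

theorem powerSeries_aut_eq_one_general (K : Type*) [Field K]
    (σ : PowerSeries K ≃ₐ[K] PowerSeries K) (m : ℕ) (hmK : (m : K) ≠ 0)
    (hσm : σ ^ m = 1) (h1 : PowerSeries.coeff 1 (σ PowerSeries.X) = 1) :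
    σ = 1 := by
  have hσX : σ X = X := by
    refine algHom_X_eq_X_of_pow_apply_X_eq (φ := σ.toAlgHom) h1 hmK ?_
    rw [← AlgEquiv.toAlgHomHom_apply, ← map_pow, hσm]
    rfl
  exact AlgEquiv.coe_toAlgHom_injective (algHom_ext_of_X hσX)

/-- Let `σ` be a `K`-algebra automorphism of `K⟦X⟧`.  If `σ ^ m = 1` for some `m ≥ 1`
with `(m : K) ≠ 0` (i.e. the characteristic of `K` does not divide `m`) and the
coefficient of `X` in `σ(X)` equals `1`, then `σ` is the identity automorphism. -/
theorem powerSeries_aut_eq_one (K : Type*) [Field K]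
    (σ : PowerSeries K ≃ₐ[K] PowerSeries K) (m : ℕ) (hm : 1 ≤ m) (hmK : (m : K) ≠ 0)
    (hσm : σ ^ m = 1) (h1 : PowerSeries.coeff 1 (σ PowerSeries.X) = 1) :
    σ = 1 :=
  powerSeries_aut_eq_one_general K σ m hmK hσm h1
end

section
/- Let a, b be nonzero rational numbers and let B = ℍ[ℚ, a, b] be the corresponding quaternion algebra over ℚ. Assume B is a division ring and B is indefinite, i.e. ℍ[ℝ, a, b] is not a division ring. Let O ⊆ B be an order, i.e. a subring of B that is finitely generated as a ℤ-module and whose ℚ-linear span is all of B. Then the ℚ-linear span of the set Γ = {γ ∈ O : γ * star γ = 1} of norm-one elements of O is all of B. -/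
/-!
Indefiniteness forces `a > 0` or `b > 0`, since for `a, b < 0` the reduced norm is positive
definite on `ℍ[ℝ, a, b]`; say `i² = a > 0`. For a pure quaternion `p` with `p² = c > 0`, an
integer multiple `q ∈ O` has `q² = d ∈ ℤ`, positive and not a square because `B` is a division
algebra. A Pell solution `s² - d t² = 1` makes `s + t q` a norm-one element of `O`, so `p` lies in
the span of `Γ`. For `u ≠ 0` the conjugate `u i ū` is again pure, with square `(u ū)² a > 0`,
and the conjugates of `i` by `1 + j` and `1 + k`, together with `1` and `i`, span `B`.
-/

open Quaternion Submodule

theorem AddSubgroup.exists_nsmul_mem_of_mem_span_rat {M : Type*} [AddCommGroup M] [Module ℚ M]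
    (A : AddSubgroup M) {x : M} (hx : x ∈ span ℚ (A : Set M)) :
    ∃ n : ℕ, 0 < n ∧ n • x ∈ A := by
  induction hx using span_induction with
  | mem x hx => exact ⟨1, one_pos, by simpa using hx⟩
  | zero => exact ⟨1, one_pos, by simp⟩
  | add x y _ _ hx hy =>
    obtain ⟨m, hm, hmx⟩ := hx
    obtain ⟨n, hn, hny⟩ := hy
    refine ⟨n * m, mul_pos hn hm, ?_⟩
    rw [smul_add, mul_nsmul', mul_nsmul]
    exact add_mem (A.nsmul_mem hmx n) (A.nsmul_mem hny m)
  | smul q x _ hx =>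
    obtain ⟨n, hn, hnx⟩ := hx
    refine ⟨q.den * n, mul_pos q.den_pos hn, ?_⟩
    have : (q.den * n : ℕ) • q • x = q.num • n • x := by
      rw [← Nat.cast_smul_eq_nsmul ℚ, ← Nat.cast_smul_eq_nsmul ℚ n, ← Int.cast_smul_eq_zsmul ℚ,
        smul_smul, smul_smul, Nat.cast_mul, mul_comm (q.den : ℚ), mul_assoc, Rat.den_mul_eq_num]
      ring_nf
    rw [this]
    exact A.zsmul_mem hnx _

namespace QuaternionAlgebra

variable {R : Type*} [CommRing R] {c₁ c₂ c₃ : R}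

theorem re_mul_mul_star (u : ℍ[R,c₁,c₃]) {p : ℍ[R,c₁,c₃]} (hp : p.re = 0) :
    (u * p * star u).re = 0 := by
  simp [hp]; ring

theorem mul_mul_star_mul_self (u : ℍ[R,c₁,c₂,c₃]) {p : ℍ[R,c₁,c₂,c₃]} {c : R}
    (hp : p * p = c) : u * p * star u * (u * p * star u) = ((u * star u).re ^ 2 * c : R) := by
  set n := (u * star u).re
  have h₁ : u * star u = n := mul_star_eq_coe u
  have h₂ : star u * u = n := by rw [star_comm_self']; exact h₁
  calc u * p * star u * (u * p * star u) = u * p * (star u * u) * p * star u := by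
        simp only [mul_assoc]
    _ = n • c • (u * star u) := by
        rw [h₂, mul_coe_eq_smul, smul_mul_assoc, smul_mul_assoc, mul_assoc u p p, hp,
          mul_coe_eq_smul, smul_mul_assoc]
    _ = (n ^ 2 * c : R) := by
        rw [h₁, smul_coe, smul_coe]
        congr 1
        ring

theorem re_mul_star_ne_zero [NoZeroDivisors ℍ[R,c₁,c₂,c₃]] {u : ℍ[R,c₁,c₂,c₃]} (hu : u ≠ 0) :
    (u * star u).re ≠ 0 := by
  intro h
  have : u * star u = 0 := by rw [mul_star_eq_coe, h, coe_zero]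
  simp [hu] at this

theorem isUnit_of_re_mul_star_ne_zero {K : Type*} [Field K] {c₁ c₂ c₃ : K} {x : ℍ[K,c₁,c₂,c₃]}
    (hx : (x * star x).re ≠ 0) : IsUnit x := by
  set n := (x * star x).re
  have h₁ : x * star x = n := mul_star_eq_coe x
  have h₂ : star x * x = n := by rw [star_comm_self']; exact h₁
  refine ⟨⟨x, n⁻¹ • star x, ?_, ?_⟩, rfl⟩
  · rw [mul_smul_comm, h₁, smul_coe, inv_mul_cancel₀ hx, coe_one]
  · rw [smul_mul_assoc, h₂, smul_coe, inv_mul_cancel₀ hx, coe_one]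

theorem re_mul_star_pos {K : Type*} [Field K] [LinearOrder K] [IsStrictOrderedRing K] {c₁ c₂ : K}
    (h₁ : c₁ < 0) (h₂ : c₂ < 0) {x : ℍ[K,c₁,c₂]} (hx : x ≠ 0) : 0 < (x * star x).re := by
  have hre : (x * star x).re = x.re ^ 2 + (-c₁) * x.imI ^ 2 + (-c₂) * x.imJ ^ 2
      + (c₁ * c₂) * x.imK ^ 2 := by simp; ring
  have hc : 0 < c₁ * c₂ := mul_pos_of_neg_of_neg h₁ h₂
  have t₁ := sq_nonneg x.re
  have t₂ := mul_nonneg (neg_nonneg.2 h₁.le) (sq_nonneg x.imI)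
  have t₃ := mul_nonneg (neg_nonneg.2 h₂.le) (sq_nonneg x.imJ)
  have t₄ := mul_nonneg hc.le (sq_nonneg x.imK)
  rw [hre]
  by_contra! hle
  obtain ⟨h0, hI, hJ, hK⟩ : x.re ^ 2 = 0 ∧ -c₁ * x.imI ^ 2 = 0 ∧ -c₂ * x.imJ ^ 2 = 0 ∧
      c₁ * c₂ * x.imK ^ 2 = 0 := by refine ⟨?_, ?_, ?_, ?_⟩ <;> linarith
  exact hx (by ext <;> simp_all [h₁.ne, h₂.ne, hc.ne'])

theorem eq_zero_of_mul_self_eq_coe_mul_self [NoZeroDivisors ℍ[R,c₁,c₃]] {q : ℍ[R,c₁,c₃]}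
    (hq : q.re = 0) {r : R} (hqr : q * q = (r * r : R)) : r = 0 := by
  have : (q - r) * (q + r) = 0 := by
    rw [← (coe_commute r q).symm.mul_self_sub_mul_self_eq', hqr, coe_mul, sub_self]
  rcases mul_eq_zero.1 this with h | h
  · simpa [hq, eq_comm] using congrArg re (sub_eq_zero.1 h)
  · simpa [hq] using congrArg re (eq_neg_of_add_eq_zero_left h)

theorem eq_top_of_one_i_j_k_mem {W : Submodule R ℍ[R,c₁,c₂,c₃]} (h₁ : 1 ∈ W)
    (hi : ⟨0, 1, 0, 0⟩ ∈ W) (hj : ⟨0, 0, 1, 0⟩ ∈ W) (hk : ⟨0, 0, 0, 1⟩ ∈ W) : W = ⊤ := by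
  refine eq_top_iff.2 fun x _ => ?_
  have hx : x = x.re • 1 + x.imI • ⟨0, 1, 0, 0⟩ + x.imJ • ⟨0, 0, 1, 0⟩ + x.imK • ⟨0, 0, 0, 1⟩ := by
    ext <;> simp
  rw [hx]
  exact add_mem (add_mem (add_mem (smul_mem _ _ h₁) (smul_mem _ _ hi)) (smul_mem _ _ hj))
    (smul_mem _ _ hk)

end QuaternionAlgebra

open QuaternionAlgebra

section NormOne

variable {a b : ℚ}

def normOneSpan (O : Subring ℍ[ℚ,a,b]) : Submodule ℚ ℍ[ℚ,a,b] :=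
  span ℚ {γ | γ ∈ O ∧ γ * star γ = 1}

variable {O : Subring ℍ[ℚ,a,b]}

theorem one_mem_normOneSpan : 1 ∈ normOneSpan O :=
  subset_span ⟨one_mem O, by simp⟩

variable [NoZeroDivisors ℍ[ℚ,a,b]]

theorem mem_normOneSpan_of_mul_self_eq_intCast {q : ℍ[ℚ,a,b]} (hqO : q ∈ O) (hq : q.re = 0)
    {d : ℤ} (hqq : q * q = ((d : ℚ) : ℍ[ℚ,a,b])) (hd : 0 < d) : q ∈ normOneSpan O := by
  have hsq : ¬IsSquare d := by
    rintro ⟨r, rfl⟩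
    have hr := eq_zero_of_mul_self_eq_coe_mul_self hq (r := (r : ℚ)) (by rw [hqq]; push_cast; rfl)
    simp [Int.cast_eq_zero.1 hr] at hd
  obtain ⟨s, t, hst, ht⟩ := Pell.exists_of_not_isSquare hd hsq
  set γ : ℍ[ℚ,a,b] := s • 1 + t • q with hγ
  have hγO : γ ∈ O := add_mem (zsmul_mem (one_mem O) s) (zsmul_mem hqO t)
  have hre : a * q.imI * q.imI + b * q.imJ * q.imJ - a * b * q.imK * q.imK = d := by
    simpa [hq] using congrArg re hqq
  have hγ₁ : γ * star γ = 1 := by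
    have hst' : (s : ℚ) ^ 2 - d * (t : ℚ) ^ 2 = 1 := by exact_mod_cast hst
    ext <;> simp [hγ, hq]
    · linear_combination hst' - (t : ℚ) ^ 2 * hre
    all_goals ring
  have hqγ : q = (t : ℚ)⁻¹ • (γ - (s : ℚ) • 1) := by
    ext <;> simp [hγ] <;> field_simp
  rw [hqγ]
  exact smul_mem _ _ (sub_mem (subset_span ⟨hγO, hγ₁⟩) (smul_mem _ _ one_mem_normOneSpan))

theorem mem_normOneSpan_of_mul_self_pos (hspan : span ℚ (O : Set ℍ[ℚ,a,b]) = ⊤)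
    {p : ℍ[ℚ,a,b]} (hp : p.re = 0) {c : ℚ} (hpp : p * p = c) (hc : 0 < c) :
    p ∈ normOneSpan O := by
  obtain ⟨n, hn, hnO⟩ := O.toAddSubgroup.exists_nsmul_mem_of_mem_span_rat
    (x := c.den • p) (by rw [Subring.coe_toAddSubgroup, hspan]; trivial)
  set m : ℕ := c.den * n
  have hmO : (m : ℚ) • p ∈ O := by rwa [Nat.cast_smul_eq_nsmul, mul_nsmul]
  have hm : (m : ℚ) ≠ 0 := by positivity
  have hmm : (m : ℚ) • p * ((m : ℚ) • p) = (((n * n * c.den * c.num : ℤ) : ℚ) : ℍ[ℚ,a,b]) := by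
    rw [smul_mul_smul_comm, hpp, smul_coe]
    congr 1
    push_cast [m]
    rw [← Rat.mul_den_eq_num]
    ring
  have hmp := mem_normOneSpan_of_mul_self_eq_intCast hmO (by simp [hp]) hmm
    (by have := Rat.num_pos.2 hc; positivity)
  simpa [hm] using smul_mem _ (m : ℚ)⁻¹ hmp

theorem mul_mul_star_mem_normOneSpan (hspan : span ℚ (O : Set ℍ[ℚ,a,b]) = ⊤)
    {p : ℍ[ℚ,a,b]} (hp : p.re = 0) {c : ℚ} (hpp : p * p = c) (hc : 0 < c)
    {u : ℍ[ℚ,a,b]} (hu : u ≠ 0) : u * p * star u ∈ normOneSpan O :=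
  mem_normOneSpan_of_mul_self_pos hspan (re_mul_mul_star u hp) (mul_mul_star_mul_self u hpp)
    (mul_pos (pow_two_pos_of_ne_zero (re_mul_star_ne_zero hu)) hc)

theorem normOneSpan_eq_top_of_pos_left (hspan : span ℚ (O : Set ℍ[ℚ,a,b]) = ⊤)
    (ha : 0 < a) : normOneSpan O = ⊤ := by
  set i : ℍ[ℚ,a,b] := ⟨0, 1, 0, 0⟩
  have hii : i * i = a := by ext <;> simp [i]
  have conj_mem {u : ℍ[ℚ,a,b]} (hu : u.re ≠ 0) : u * i * star u ∈ normOneSpan O :=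
    mul_mul_star_mem_normOneSpan hspan rfl hii ha (by rintro rfl; exact hu rfl)
  have hi := mem_normOneSpan_of_mul_self_pos hspan rfl hii ha
  have hk : (⟨0, 0, 0, 1⟩ : ℍ[ℚ,a,b]) =
      ((1 + b) / 2) • i - (1 / 2 : ℚ) • ((⟨1, 0, 1, 0⟩ : ℍ[ℚ,a,b]) * i * star ⟨1, 0, 1, 0⟩) := by
    ext <;> simp [i] <;> ring
  have hj : (⟨0, 0, 1, 0⟩ : ℍ[ℚ,a,b]) =
      ((1 - a * b) / (2 * a)) • i -
        (2 * a)⁻¹ • ((⟨1, 0, 0, 1⟩ : ℍ[ℚ,a,b]) * i * star ⟨1, 0, 0, 1⟩) := by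
    ext <;> simp [i] <;> field_simp <;> ring
  refine eq_top_of_one_i_j_k_mem one_mem_normOneSpan hi ?_ ?_
  · rw [hj]; exact sub_mem (smul_mem _ _ hi) (smul_mem _ _ (conj_mem one_ne_zero))
  · rw [hk]; exact sub_mem (smul_mem _ _ hi) (smul_mem _ _ (conj_mem one_ne_zero))

theorem normOneSpan_eq_top_of_pos_right (hspan : span ℚ (O : Set ℍ[ℚ,a,b]) = ⊤)
    (hb : 0 < b) : normOneSpan O = ⊤ := by
  set j : ℍ[ℚ,a,b] := ⟨0, 0, 1, 0⟩
  have hjj : j * j = b := by ext <;> simp [j]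
  have conj_mem {u : ℍ[ℚ,a,b]} (hu : u.re ≠ 0) : u * j * star u ∈ normOneSpan O :=
    mul_mul_star_mem_normOneSpan hspan rfl hjj hb (by rintro rfl; exact hu rfl)
  have hj := mem_normOneSpan_of_mul_self_pos hspan rfl hjj hb
  have hk : (⟨0, 0, 0, 1⟩ : ℍ[ℚ,a,b]) =
      (1 / 2 : ℚ) • ((⟨1, 1, 0, 0⟩ : ℍ[ℚ,a,b]) * j * star ⟨1, 1, 0, 0⟩) - ((1 + a) / 2) • j := by
    ext <;> simp [j] <;> ring
  have hi : (⟨0, 1, 0, 0⟩ : ℍ[ℚ,a,b]) =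
      (2 * b)⁻¹ • ((⟨1, 0, 0, 1⟩ : ℍ[ℚ,a,b]) * j * star ⟨1, 0, 0, 1⟩) -
        ((1 - a * b) / (2 * b)) • j := by
    ext <;> simp [j] <;> field_simp <;> ring
  refine eq_top_of_one_i_j_k_mem one_mem_normOneSpan ?_ hj ?_
  · rw [hi]; exact sub_mem (smul_mem _ _ (conj_mem one_ne_zero)) (smul_mem _ _ hj)
  · rw [hk]; exact sub_mem (smul_mem _ _ (conj_mem one_ne_zero)) (smul_mem _ _ hj)

end NormOne

theorem quaternion_norm_one_units_span_general (a b : ℚ) (ha : a ≠ 0) (hb : b ≠ 0)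
    (hdiv : ∀ x : ℍ[ℚ, a, b], x ≠ 0 → IsUnit x)
    (hindef : ¬ ∀ x : ℍ[ℝ, (a : ℝ), (b : ℝ)], x ≠ 0 → IsUnit x)
    (O : Subring ℍ[ℚ, a, b])
    (hspan : Submodule.span ℚ (O : Set ℍ[ℚ, a, b]) = ⊤) :
    Submodule.span ℚ {γ : ℍ[ℚ, a, b] | γ ∈ O ∧ γ * star γ = 1} = ⊤ := by
  have : NoZeroDivisors ℍ[ℚ, a, b] :=
    ⟨fun {x _} h => or_iff_not_imp_left.2 fun hx => (hdiv x hx).mul_right_eq_zero.1 h⟩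
  have hpos : 0 < a ∨ 0 < b := by
    by_contra! h
    have ha' : (a : ℝ) < 0 := by exact_mod_cast h.1.lt_of_ne ha
    have hb' : (b : ℝ) < 0 := by exact_mod_cast h.2.lt_of_ne hb
    exact hindef fun x hx => isUnit_of_re_mul_star_ne_zero (re_mul_star_pos ha' hb' hx).ne'
  rcases hpos with ha | hb
  · exact normOneSpan_eq_top_of_pos_left hspan ha
  · exact normOneSpan_eq_top_of_pos_right hspan hb

/-- Let `B = ℍ[ℚ, a, b]` (`a, b ≠ 0`) be an indefinite rational quaternion division
algebra and let `O ⊆ B` be an order (a subring, finitely generated as a `ℤ`-module,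
whose `ℚ`-linear span is all of `B`).  Then the `ℚ`-linear span of the set
`Γ = {γ ∈ O : γ * star γ = 1}` of norm-one elements of `O` is all of `B`. -/
theorem quaternion_norm_one_units_span (a b : ℚ) (ha : a ≠ 0) (hb : b ≠ 0)
    (hdiv : ∀ x : ℍ[ℚ, a, b], x ≠ 0 → IsUnit x)
    (hindef : ¬ ∀ x : ℍ[ℝ, (a : ℝ), (b : ℝ)], x ≠ 0 → IsUnit x)
    (O : Subring ℍ[ℚ, a, b])
    (hfg : O.toAddSubgroup.FG)
    (hspan : Submodule.span ℚ (O : Set ℍ[ℚ, a, b]) = ⊤) :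
    Submodule.span ℚ {γ : ℍ[ℚ, a, b] | γ ∈ O ∧ γ * star γ = 1} = ⊤ :=
  quaternion_norm_one_units_span_general a b ha hb hdiv hindef O hspan
end
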